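/- Let T : S → T' be a triangulated functor between pretriangulated categories and A a subring of ℚ. Then T is fully faithful if and only if the following two conditions hold: (i) for all A-torsion objects X, Y of S, the map Hom_S(X, Y) → Hom_{T'}(T X, T Y) induced by T is bijective; (ii) for all objects X, Y of S, the map Hom_S(X, Y) ⊗_ℤ A → Hom_{T'}(T X, T Y) ⊗_ℤ A induced by T is bijective. -/

import Mathlib

/-!
The integers invertible in `A` form a submonoid `Σ ⊆ ℤ` with `A = Σ⁻¹ℤ`, so tensoring with `A`
is localization at `Σ`, and (ii) forces the kernel and the cokernel of
`T : Hom(X, Y) → Hom(T X, T Y)` to be killed by elements of `Σ`.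

For `n ∈ Σ` the cone of `n • 𝟙 X` is killed by `n²`, hence is `A`-torsion. The long exact
`Hom` sequences of these triangles, together with (i), show that `T` is bijective on `Hom(X, Z)`
whenever `Z` is `A`-torsion, that `v` is divisible by `n` as soon as `T v` is, and that every
morphism `T X ⟶ T Y` killed by `n` lifts. Writing `n • u = T m` and dividing `m` by `n` gives
fullness. A morphism `f` with `T f = 0` is killed by some `n ∈ Σ`, so it factors through the fiber
of `n • 𝟙 Y`, which is `A`-torsion; fullness and injectivity on torsion targets then force `f = 0`.
-/

open CategoryTheory Limits Pretriangulated

/-- An object `X` is `A`-torsion if `n • 𝟙 X = 0` for some nonzero integer `n`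
invertible in `A`. -/
def IsATorsion (A : Subring ℚ) {C : Type*} [Category C] [Preadditive C] (X : C) : Prop :=
  ∃ n : ℤ, n ≠ 0 ∧ IsUnit (n : A) ∧ (n : ℤ) • 𝟙 X = 0

open TensorProduct

namespace Subring

variable (A : Subring ℚ)

def intUnits : Submonoid ℤ := (IsUnit.submonoid A).comap (Int.castRingHom A)

lemma isUnit_den (a : A) : IsUnit (((a : ℚ).den : ℤ) : A) := by
  obtain ⟨u, v, huv⟩ := (a : ℚ).isCoprime_num_den
  refine .of_mul_eq_one (u * a + v) (Subtype.ext ?_)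
  push_cast
  rw [mul_add, mul_left_comm, Rat.den_mul_eq_num]
  exact_mod_cast by linear_combination huv

instance : IsLocalization A.intUnits A where
  map_units n := n.2
  surj a := ⟨⟨(a : ℚ).num, ⟨(a : ℚ).den, A.isUnit_den a⟩⟩, Subtype.ext <| by simp⟩
  exists_of_eq h := ⟨1, by simpa using h⟩

instance (M : Type*) [AddCommGroup M] :
    IsLocalizedModule A.intUnits ((TensorProduct.mk ℤ M A).flip 1) :=
  IsLocalizedModule.of_linearEquiv A.intUnits (TensorProduct.mk ℤ A M 1) (TensorProduct.comm ℤ A M)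

variable {A} {M N : Type*} [AddCommGroup M] [AddCommGroup N] (ψ : M →ₗ[ℤ] N)

lemma exists_smul_eq_zero_of_rTensor_injective (h : Function.Injective (ψ.rTensor A)) {x : M}
    (hx : ψ x = 0) : ∃ n : ℤ, IsUnit (n : A) ∧ n • x = 0 := by
  have : x ⊗ₜ[ℤ] (1 : A) = 0 := h (by simp [hx])
  obtain ⟨⟨n, hn⟩, hnx⟩ :=
    (IsLocalizedModule.eq_zero_iff A.intUnits ((TensorProduct.mk ℤ M A).flip 1)).mp this
  exact ⟨n, hn, hnx⟩

lemma exists_smul_mem_range_of_rTensor_surjective (h : Function.Surjective (ψ.rTensor A))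
    (y : N) : ∃ n : ℤ, IsUnit (n : A) ∧ ∃ x, ψ x = n • y := by
  obtain ⟨t, ht⟩ := h (y ⊗ₜ 1)
  obtain ⟨⟨x, s⟩, hxs⟩ := IsLocalizedModule.surj A.intUnits ((TensorProduct.mk ℤ M A).flip 1) t
  have : ψ x ⊗ₜ[ℤ] (1 : A) = ((s : ℤ) • y) ⊗ₜ (1 : A) := by
    have hxs : x ⊗ₜ[ℤ] (1 : A) = (s : ℤ) • t := hxs.symm
    rw [← LinearMap.rTensor_tmul, hxs, map_zsmul, ht, smul_tmul']
  obtain ⟨c, hc⟩ := IsLocalizedModule.exists_of_eq (S := A.intUnits)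
    (f := (TensorProduct.mk ℤ N A).flip 1) this
  refine ⟨c * s, mul_mem c.2 s.2, (c : ℤ) • x, ?_⟩
  simpa [Submonoid.smul_def, mul_smul] using hc

end Subring

section Torsion

variable {A : Subring ℚ}

namespace CategoryTheory

lemma Preadditive.zsmul_eq_zero_of_zsmul_id_eq_zero {C : Type*} [Category C] [Preadditive C]
    {n : ℤ} {Y Z : C} (h : n • 𝟙 Z = 0) (g : Y ⟶ Z) : n • g = 0 := by
  rw [← Category.comp_id g, ← Preadditive.comp_zsmul, h, comp_zero]

lemma Functor.zsmul_id_obj_eq_zero {C D : Type*} [Category C] [Preadditive C] [Category D]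
    [Preadditive D] (F : C ⥤ D) [F.Additive] {n : ℤ} {Z : C} (h : n • 𝟙 Z = 0) :
    n • 𝟙 (F.obj Z) = 0 := by
  rw [← F.map_id, ← F.map_zsmul, h, F.map_zero]

end CategoryTheory

lemma IsATorsion.map {C D : Type*} [Category C] [Preadditive C] [Category D] [Preadditive D]
    {X : C} (h : IsATorsion A X) (F : C ⥤ D) [F.Additive] : IsATorsion A (F.obj X) := by
  obtain ⟨n, hn0, hnu, hn⟩ := h
  exact ⟨n, hn0, hnu, F.zsmul_id_obj_eq_zero hn⟩

variable {C : Type*} [Category C] [HasZeroObject C] [Preadditive C]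
  [HasShift C ℤ] [∀ n : ℤ, (shiftFunctor C n).Additive] [Pretriangulated C]

lemma exists_isATorsion_cone_zsmul_id {n : ℤ} (hnu : IsUnit (n : A)) (X : C) :
    ∃ (W : C) (a : X ⟶ W) (b : W ⟶ X⟦(1 : ℤ)⟧),
      Triangle.mk (n • 𝟙 X) a b ∈ distTriang C ∧ IsATorsion A W := by
  obtain ⟨W, a, b, hT⟩ := distinguished_cocone_triangle (n • 𝟙 X)
  refine ⟨W, a, b, hT, ?_⟩
  have hn0 : n ≠ 0 := by rintro rfl; simp at hnu
  have hna : n • a = 0 := by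
    have : (n • 𝟙 X) ≫ a = 0 := comp_distTriang_mor_zero₁₂ _ hT
    simpa using this
  have hnb : (n • 𝟙 W) ≫ b = 0 := by
    have : b ≫ (n • 𝟙 X)⟦(1 : ℤ)⟧' = 0 := comp_distTriang_mor_zero₃₁ _ hT
    simpa [Functor.map_zsmul] using this
  -- `n • 𝟙 W` factors through `a`, and `n • a = 0`
  obtain ⟨c, hc⟩ : ∃ c : W ⟶ X, n • 𝟙 W = c ≫ a :=
    Triangle.coyoneda_exact₂ _ (rot_of_distTriang _ hT) _ hnb
  refine ⟨n * n, mul_ne_zero hn0 hn0, by simpa using hnu.mul hnu, ?_⟩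
  rw [mul_smul, hc, ← Preadditive.comp_zsmul, hna, comp_zero]

lemma exists_isATorsion_fiber_zsmul_id {n : ℤ} (hnu : IsUnit (n : A)) (Y : C) :
    ∃ (P : C) (p : P ⟶ Y) (c : Y ⟶ P⟦(1 : ℤ)⟧),
      Triangle.mk p (n • 𝟙 Y) c ∈ distTriang C ∧ IsATorsion A P := by
  obtain ⟨W, _, _, hYW, hW⟩ := exists_isATorsion_cone_zsmul_id hnu Y
  exact ⟨_, _, _, inv_rot_of_distTriang _ hYW, hW.map _⟩

variable {D : Type*} [Category D] [HasZeroObject D] [Preadditive D]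
  [HasShift D ℤ] [∀ n : ℤ, (shiftFunctor D n).Additive] [Pretriangulated D]

namespace CategoryTheory.Functor

variable (A) in
def MapBijectiveOnATorsion (T : C ⥤ D) : Prop :=
  ∀ X Y : C, IsATorsion A X → IsATorsion A Y → Function.Bijective (fun f : X ⟶ Y => T.map f)

variable {T : C ⥤ D} [T.Additive] [T.CommShift ℤ] [T.IsTriangulated]

namespace MapBijectiveOnATorsion

lemma map_surjective (hT : T.MapBijectiveOnATorsion A) (X : C) {Z : C} (hZ : IsATorsion A Z) :
    Function.Surjective (fun f : X ⟶ Z => T.map f) := by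
  intro u
  obtain ⟨n, hn0, hnu, hn⟩ := hZ
  obtain ⟨W, a, _, hXW, hW⟩ := exists_isATorsion_cone_zsmul_id hnu X
  have hnu' : T.map (n • 𝟙 X) ≫ u = 0 := by
    simpa using Preadditive.zsmul_eq_zero_of_zsmul_id_eq_zero (T.zsmul_id_obj_eq_zero hn) u
  obtain ⟨v, hv⟩ : ∃ v : T.obj W ⟶ T.obj Z, u = T.map a ≫ v :=
    Triangle.yoneda_exact₂ _ (T.map_distinguished _ hXW) u hnu'
  obtain ⟨g, rfl⟩ := (hT W Z hW ⟨n, hn0, hnu, hn⟩).2 v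
  exact ⟨a ≫ g, by simp [hv]⟩

lemma map_injective (hT : T.MapBijectiveOnATorsion A) (X : C) {Z : C} (hZ : IsATorsion A Z) :
    Function.Injective (fun f : X ⟶ Z => T.map f) := by
  refine (injective_iff_map_eq_zero (T.mapAddHom (X := X) (Y := Z))).2 fun f hf => ?_
  obtain ⟨n, hn0, hnu, hn⟩ := hZ
  obtain ⟨W, a, b, hXW, hW⟩ := exists_isATorsion_cone_zsmul_id hnu X
  have hnf : (n • 𝟙 X) ≫ f = 0 := by simpa using Preadditive.zsmul_eq_zero_of_zsmul_id_eq_zero hn f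
  obtain ⟨g, rfl⟩ : ∃ g : W ⟶ Z, f = a ≫ g := Triangle.yoneda_exact₂ _ hXW f hnf
  have hag : T.map a ≫ T.map g = 0 := by simpa using hf
  obtain ⟨w, hw⟩ : ∃ w : T.obj (X⟦(1 : ℤ)⟧) ⟶ T.obj Z, T.map g = T.map b ≫ w :=
    Triangle.yoneda_exact₂ _ (T.map_distinguished _ (rot_of_distTriang _ hXW)) _ hag
  obtain ⟨w, rfl⟩ := hT.map_surjective _ ⟨n, hn0, hnu, hn⟩ w
  obtain rfl : g = b ≫ w := (hT W Z hW ⟨n, hn0, hnu, hn⟩).1 (by simpa using hw)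
  have hab : a ≫ b = 0 := comp_distTriang_mor_zero₂₃ _ hXW
  rw [reassoc_of% hab, zero_comp]

lemma exists_eq_zsmul_of_map_eq_zsmul (hT : T.MapBijectiveOnATorsion A) {n : ℤ}
    (hnu : IsUnit (n : A)) {X Y : C} {v : X ⟶ Y} {u : T.obj X ⟶ T.obj Y} (h : T.map v = n • u) :
    ∃ v' : X ⟶ Y, v = n • v' := by
  obtain ⟨W, δ, _, hYW, hW⟩ := exists_isATorsion_cone_zsmul_id hnu Y
  have hnδ : n • δ = 0 := by
    have : (n • 𝟙 Y) ≫ δ = 0 := comp_distTriang_mor_zero₁₂ _ hYW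
    simpa using this
  have hvδ : v ≫ δ = 0 := hT.map_injective X hW <| by
    simp only [T.map_comp, h, Linear.smul_comp, ← Linear.comp_smul, ← T.map_zsmul, hnδ,
      T.map_zero, comp_zero]
  obtain ⟨v', hv'⟩ : ∃ v' : X ⟶ Y, v = v' ≫ (n • 𝟙 Y) := Triangle.coyoneda_exact₂ _ hYW v hvδ
  exact ⟨v', by simpa using hv'⟩

lemma exists_map_eq_of_zsmul_eq_zero (hT : T.MapBijectiveOnATorsion A) {n : ℤ}
    (hnu : IsUnit (n : A)) {X Y : C} {u : T.obj X ⟶ T.obj Y} (hu : n • u = 0) :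
    ∃ g : X ⟶ Y, T.map g = u := by
  obtain ⟨P, p, _, hPY, hP⟩ := exists_isATorsion_fiber_zsmul_id hnu Y
  have hun : u ≫ T.map (n • 𝟙 Y) = 0 := by simpa using hu
  obtain ⟨h, rfl⟩ : ∃ h : T.obj X ⟶ T.obj P, u = h ≫ T.map p :=
    Triangle.coyoneda_exact₂ _ (T.map_distinguished _ hPY) u hun
  obtain ⟨h, rfl⟩ := hT.map_surjective X hP h
  exact ⟨h ≫ p, T.map_comp _ _⟩

lemma full (hT : T.MapBijectiveOnATorsion A)
    (hcoker : ∀ {X Y : C} (u : T.obj X ⟶ T.obj Y),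
      ∃ n : ℤ, IsUnit (n : A) ∧ ∃ m, T.map m = n • u) :
    T.Full where
  map_surjective {X Y} u := by
    obtain ⟨n, hnu, m, hm⟩ := hcoker u
    obtain ⟨v, rfl⟩ := hT.exists_eq_zsmul_of_map_eq_zsmul hnu hm
    have : n • (u - T.map v) = 0 := by rw [smul_sub, ← hm, T.map_zsmul, sub_self]
    obtain ⟨g, hg⟩ := hT.exists_map_eq_of_zsmul_eq_zero hnu this
    exact ⟨v + g, by rw [T.map_add, hg, add_sub_cancel]⟩

lemma faithful (hT : T.MapBijectiveOnATorsion A) [T.Full]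
    (hker : ∀ {X Y : C} (f : X ⟶ Y), T.map f = 0 → ∃ n : ℤ, IsUnit (n : A) ∧ n • f = 0) :
    T.Faithful where
  map_injective {X Y} := by
    refine (injective_iff_map_eq_zero (T.mapAddHom (X := X) (Y := Y))).2 fun f hf => ?_
    obtain ⟨n, hnu, hnf⟩ := hker f hf
    obtain ⟨P, p, _, hPY, hP⟩ := exists_isATorsion_fiber_zsmul_id hnu Y
    have hfn : f ≫ (n • 𝟙 Y) = 0 := by simpa using hnf
    obtain ⟨h, rfl⟩ : ∃ h : X ⟶ P, f = h ≫ p := Triangle.coyoneda_exact₂ _ hPY f hfn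
    obtain ⟨Q, q, _, hQP⟩ := distinguished_cocone_triangle₁ p
    have hhp : T.map h ≫ T.map p = 0 := by simpa using hf
    obtain ⟨k, hk⟩ : ∃ k : T.obj X ⟶ T.obj Q, T.map h = k ≫ T.map q :=
      Triangle.coyoneda_exact₂ _ (T.map_distinguished _ hQP) _ hhp
    obtain ⟨k, rfl⟩ := T.map_surjective k
    obtain rfl : h = k ≫ q := hT.map_injective X hP (by simpa using hk)
    have hqp : q ≫ p = 0 := comp_distTriang_mor_zero₁₂ _ hQP
    rw [Category.assoc, hqp, comp_zero]

end MapBijectiveOnATorsion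

end CategoryTheory.Functor

end Torsion

/-- Proposition B.2.4 a): a triangulated functor `T` between pretriangulated categories is
fully faithful iff (i) it is bijective on Hom groups between `A`-torsion objects, and
(ii) it is bijective on Hom groups tensored with `A`. -/
theorem stmt_4 (A : Subring ℚ) {S : Type*} {T' : Type*} [Category S] [Category T']
    [HasZeroObject S] [HasZeroObject T'] [Preadditive S] [Preadditive T']
    [HasShift S ℤ] [HasShift T' ℤ]
    [∀ n : ℤ, (CategoryTheory.shiftFunctor S n).Additive]
    [∀ n : ℤ, (CategoryTheory.shiftFunctor T' n).Additive]
    [Pretriangulated S] [Pretriangulated T']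
    (T : S ⥤ T') [T.Additive] [T.CommShift ℤ] [T.IsTriangulated] :
    (T.Full ∧ T.Faithful) ↔
      ((∀ (X Y : S), IsATorsion A X → IsATorsion A Y →
          Function.Bijective (fun f : X ⟶ Y => T.map f)) ∧
       (∀ (X Y : S), Function.Bijective
          (LinearMap.rTensor (↥A)
            (AddMonoidHom.toIntLinearMap (T.mapAddHom (X := X) (Y := Y)))))) := by
  constructor
  · rintro ⟨_, _⟩
    have hbij (X Y : S) : Function.Bijective (fun f : X ⟶ Y => T.map f) :=
      ⟨T.map_injective, T.map_surjective⟩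
    refine ⟨fun X Y _ _ => hbij X Y, fun X Y => ?_⟩
    exact (LinearEquiv.rTensor A (.ofBijective (T.mapAddHom (X := X) (Y := Y)).toIntLinearMap
      (hbij X Y))).bijective
  · rintro ⟨hi, hii⟩
    have hT : T.MapBijectiveOnATorsion A := hi
    have : T.Full := hT.full fun u =>
      A.exists_smul_mem_range_of_rTensor_surjective _ (hii _ _).2 u
    exact ⟨this, hT.faithful fun f hf =>
      A.exists_smul_eq_zero_of_rTensor_injective _ (hii _ _).1 hf⟩
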